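/- Let n, p, q, m be positive integers, A ∈ ℝ^{n×n}, B ∈ ℝ^{n×q}, C ∈ ℝ^{p×n}, and let Σ ∈ ℝ^{n×n}, Q ∈ ℝ^{n×n}, R ∈ ℝ^{p×p} be positive definite matrices. For data s̄ ∈ ℝ^n, z = (z₁,…,z_m) ∈ (ℝ^p)^m, u = (u₁,…,u_m) ∈ (ℝ^q)^m, define the MHE cost on trajectories x̂ = (x̂₀,…,x̂_m) ∈ (ℝ^n)^{m+1} by L(x̂; z, u, s̄) = (x̂₀ − s̄)ᵀ Σ⁻¹ (x̂₀ − s̄) + Σ_{k=1}^m (z_k − C x̂_k)ᵀ R⁻¹ (z_k − C x̂_k) + Σ_{k=1}^m (x̂_k − A x̂_{k−1} − B u_k)ᵀ Q⁻¹ (x̂_k − A x̂_{k−1} − B u_k). Then for every (z, u, s̄) the cost L(·; z, u, s̄) has a unique minimizer x̂*(z, u, s̄) over (ℝ^n)^{m+1}, and the map (z, u, s̄) ↦ x̂*(z, u, s̄) is linear (hence each output prediction C x̂*_m is linear in (z, u, s̄)). -/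

import Mathlib

/-!
The residual vector `(x̂₀ - s̄, zₖ - C x̂ₖ, x̂ₖ - A x̂ₖ₋₁ - B uₖ)` is `M x̂ + N (z, u, s̄)` for
linear maps `M`, `N`, and the cost is a positive definite quadratic form `Φ` (block diagonal
with blocks `Σ⁻¹`, `R⁻¹`, `Q⁻¹`) evaluated at it. `M` is injective, since `x̂₀` and the process
residuals determine `x̂` recursively, so minimizing `x ↦ Φ (M x + N d)` is a weighted least
squares problem. Its normal equations `polar Φ (M (T d) + N d) (M x) = 0` have a unique
solution, linear in `d`, because the polar form of `Φ ∘ M` is nondegenerate; then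
`Φ (M x + N d) = Φ (M (T d) + N d) + Φ (M (x - T d))` gives minimality and uniqueness.
-/

open Matrix

namespace QuadraticMap

variable {𝕜 D X W : Type*} [Field 𝕜] [LinearOrder 𝕜]
  [AddCommGroup D] [Module 𝕜 D] [AddCommGroup X] [Module 𝕜 X] [AddCommGroup W] [Module 𝕜 W]
  {Φ : QuadraticForm 𝕜 W}

theorem PosDef.comp_of_injective (hΦ : Φ.PosDef) {M : X →ₗ[𝕜] W} (hM : Function.Injective M) :
    (Φ.comp M).PosDef :=
  fun x hx => hΦ (M x) ((map_ne_zero_iff M hM).mpr hx)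

variable [IsStrictOrderedRing 𝕜]

theorem PosDef.nondegenerate_polarBilin (hΦ : Φ.PosDef) : (polarBilin Φ).Nondegenerate := by
  have hsep : ∀ w, (∀ v, polar Φ w v = 0) → w = 0 := fun w hw =>
    hΦ.anisotropic w <| by simpa [polar_self] using hw w
  exact ⟨hsep, fun v hv => hsep v fun w => polar_comm Φ v w ▸ hv w⟩

variable [FiniteDimensional 𝕜 X]

theorem PosDef.exists_linearMap_polar_eq_zero (hΦ : Φ.PosDef) {M : X →ₗ[𝕜] W}
    (hM : Function.Injective M) (N : D →ₗ[𝕜] W) :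
    ∃ T : D →ₗ[𝕜] X, ∀ d x, polar Φ (M (T d) + N d) (M x) = 0 := by
  have hG : ((polarBilin Φ).compl₁₂ M M).Nondegenerate :=
    polarBilin_comp Φ M ▸ (hΦ.comp_of_injective hM).nondegenerate_polarBilin
  let F : D →ₗ[𝕜] Module.Dual 𝕜 X := -((polarBilin Φ).compl₂ M ∘ₗ N)
  let T : D →ₗ[𝕜] X := (LinearMap.BilinForm.toDual _ hG).symm.toLinearMap ∘ₗ F
  refine ⟨T, fun d x => ?_⟩
  have normal_eq : polar Φ (M (T d)) (M x) = -polar Φ (N d) (M x) :=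
    LinearMap.BilinForm.apply_toDual_symm_apply (hB := hG) (F d) x
  rw [polar_add_left, normal_eq, neg_add_cancel]

theorem PosDef.exists_linearMap_isUniqueMin (hΦ : Φ.PosDef) {M : X →ₗ[𝕜] W}
    (hM : Function.Injective M) (N : D →ₗ[𝕜] W) :
    ∃ T : D →ₗ[𝕜] X, ∀ d, (∀ x, Φ (M (T d) + N d) ≤ Φ (M x + N d)) ∧
      ∀ x, Φ (M x + N d) ≤ Φ (M (T d) + N d) → x = T d := by
  obtain ⟨T, hT⟩ := hΦ.exists_linearMap_polar_eq_zero hM N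
  have pythagoras : ∀ d x, Φ (M x + N d) = Φ (M (T d) + N d) + Φ (M (x - T d)) := fun d x => by
    rw [show M x + N d = (M (T d) + N d) + M (x - T d) by rw [map_sub]; abel,
      QuadraticMap.map_add (⇑Φ), hT, add_zero]
  refine ⟨T, fun d => ⟨fun x => ?_, fun x hx => ?_⟩⟩
  · rw [pythagoras d x]
    exact le_add_of_nonneg_right (hΦ.nonneg _)
  · rw [pythagoras d x, add_le_iff_nonpos_right, hΦ.le_zero_iff,
      map_eq_zero_iff M hM, sub_eq_zero] at hx
    exact hx

end QuadraticMap

theorem Matrix.toQuadraticForm'_apply {ι R : Type*} [Fintype ι] [DecidableEq ι] [CommRing R]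
    (S : Matrix ι ι R) (v : ι → R) : S.toQuadraticForm' v = v ⬝ᵥ S *ᵥ v :=
  toLinearMap₂'_apply' S v v

namespace MHE

variable {n p q m : ℕ}

abbrev Residual (n p m : ℕ) := (Fin n → ℝ) × (Fin m → Fin p → ℝ) × (Fin m → Fin n → ℝ)

noncomputable def weight (S Qw : Matrix (Fin n) (Fin n) ℝ) (Rw : Matrix (Fin p) (Fin p) ℝ) :
    QuadraticForm ℝ (Residual n p m) :=
  S.toQuadraticForm'.prod
    ((QuadraticMap.pi fun _ => Rw.toQuadraticForm').prod
      (QuadraticMap.pi fun _ => Qw.toQuadraticForm'))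

theorem weight_posDef {S Qw : Matrix (Fin n) (Fin n) ℝ} {Rw : Matrix (Fin p) (Fin p) ℝ}
    (hS : S.PosDef) (hQw : Qw.PosDef) (hRw : Rw.PosDef) : (weight (m := m) S Qw Rw).PosDef :=
  hS.toQuadraticForm'.prod <|
    (QuadraticMap.posDef_pi_iff.mpr fun _ => hRw.toQuadraticForm').prod
      (QuadraticMap.posDef_pi_iff.mpr fun _ => hQw.toQuadraticForm')

@[simps]
def trajectoryResidual (A : Matrix (Fin n) (Fin n) ℝ) (C : Matrix (Fin p) (Fin n) ℝ) :
    (Fin (m + 1) → Fin n → ℝ) →ₗ[ℝ] Residual n p m where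
  toFun x := (x 0, fun j => -(C *ᵥ x j.succ), fun j => x j.succ - A *ᵥ x j.castSucc)
  map_add' x y := by
    ext <;> simp [mulVec_add] <;> ring
  map_smul' c x := by
    ext <;> simp [mulVec_smul, mul_sub]

@[simps]
def dataResidual (B : Matrix (Fin n) (Fin q) ℝ) :
    (Fin m → Fin p → ℝ) × (Fin m → Fin q → ℝ) × (Fin n → ℝ) →ₗ[ℝ] Residual n p m where
  toFun d := (-d.2.2, d.1, fun j => -(B *ᵥ d.2.1 j))
  map_add' x y := by
    ext <;> simp [mulVec_add] <;> ring
  map_smul' c x := by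
    ext <;> simp [mulVec_smul]

theorem trajectoryResidual_injective (A : Matrix (Fin n) (Fin n) ℝ)
    (C : Matrix (Fin p) (Fin n) ℝ) :
    Function.Injective (trajectoryResidual (m := m) A C) := by
  refine (injective_iff_map_eq_zero _).mpr fun x hx => funext fun i => ?_
  simp only [trajectoryResidual_apply, Prod.mk_eq_zero] at hx
  obtain ⟨hx0, -, hdyn⟩ := hx
  induction i using Fin.induction with
  | zero => exact hx0
  | succ j ih => simpa [ih] using congrFun hdyn j

noncomputable def cost (A : Matrix (Fin n) (Fin n) ℝ) (B : Matrix (Fin n) (Fin q) ℝ)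
    (C : Matrix (Fin p) (Fin n) ℝ) (Sig Q : Matrix (Fin n) (Fin n) ℝ) (R : Matrix (Fin p) (Fin p) ℝ)
    (zus : (Fin m → Fin p → ℝ) × (Fin m → Fin q → ℝ) × (Fin n → ℝ))
    (xs : Fin (m + 1) → Fin n → ℝ) : ℝ :=
  (xs 0 - zus.2.2) ⬝ᵥ Sig⁻¹.mulVec (xs 0 - zus.2.2)
    + ∑ j : Fin m, (zus.1 j - C.mulVec (xs j.succ)) ⬝ᵥ
        R⁻¹.mulVec (zus.1 j - C.mulVec (xs j.succ))
    + ∑ j : Fin m, (xs j.succ - A.mulVec (xs j.castSucc) - B.mulVec (zus.2.1 j)) ⬝ᵥ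
        Q⁻¹.mulVec (xs j.succ - A.mulVec (xs j.castSucc) - B.mulVec (zus.2.1 j))

theorem cost_eq_weight (A : Matrix (Fin n) (Fin n) ℝ) (B : Matrix (Fin n) (Fin q) ℝ)
    (C : Matrix (Fin p) (Fin n) ℝ) (Sig Q : Matrix (Fin n) (Fin n) ℝ) (R : Matrix (Fin p) (Fin p) ℝ)
    (zus : (Fin m → Fin p → ℝ) × (Fin m → Fin q → ℝ) × (Fin n → ℝ))
    (xs : Fin (m + 1) → Fin n → ℝ) :
    cost A B C Sig Q R zus xs =
      weight Sig⁻¹ Q⁻¹ R⁻¹ (trajectoryResidual A C xs + dataResidual B zus) := by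
  simp only [cost, weight, QuadraticMap.prod_apply, QuadraticMap.pi_apply,
    Matrix.toQuadraticForm'_apply, Prod.fst_add, Prod.snd_add, Pi.add_apply,
    trajectoryResidual_apply, dataResidual_apply, ← sub_eq_add_neg, neg_add_eq_sub, add_assoc]

end MHE

theorem mhe_unique_minimizer_linear_in_data_general
    {n p q m : ℕ}
    (A : Matrix (Fin n) (Fin n) ℝ) (B : Matrix (Fin n) (Fin q) ℝ)
    (C : Matrix (Fin p) (Fin n) ℝ)
    (Sig Q : Matrix (Fin n) (Fin n) ℝ) (R : Matrix (Fin p) (Fin p) ℝ)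
    (hSig : Sig.PosDef) (hQ : Q.PosDef) (hR : R.PosDef) :
    let L : (Fin m → Fin p → ℝ) × (Fin m → Fin q → ℝ) × (Fin n → ℝ) →
        (Fin (m + 1) → Fin n → ℝ) → ℝ := fun zus xs =>
      (xs 0 - zus.2.2) ⬝ᵥ Sig⁻¹.mulVec (xs 0 - zus.2.2)
      + ∑ j : Fin m, (zus.1 j - C.mulVec (xs j.succ)) ⬝ᵥ
          R⁻¹.mulVec (zus.1 j - C.mulVec (xs j.succ))
      + ∑ j : Fin m, (xs j.succ - A.mulVec (xs j.castSucc) - B.mulVec (zus.2.1 j)) ⬝ᵥ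
          Q⁻¹.mulVec (xs j.succ - A.mulVec (xs j.castSucc) - B.mulVec (zus.2.1 j))
    ∃ T : ((Fin m → Fin p → ℝ) × (Fin m → Fin q → ℝ) × (Fin n → ℝ)) →ₗ[ℝ]
        (Fin (m + 1) → Fin n → ℝ),
      ∀ zus, (∀ xs, L zus (T zus) ≤ L zus xs) ∧
        ∀ xs, L zus xs ≤ L zus (T zus) → xs = T zus := by
  intro L
  have hL : ∀ zus xs, L zus xs =
      MHE.weight Sig⁻¹ Q⁻¹ R⁻¹ (MHE.trajectoryResidual A C xs + MHE.dataResidual B zus) :=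
    MHE.cost_eq_weight A B C Sig Q R
  simp only [hL]
  exact (MHE.weight_posDef hSig.inv hQ.inv hR.inv).exists_linearMap_isUniqueMin
    (MHE.trajectoryResidual_injective A C) (MHE.dataResidual B)

/-- For a linear time-invariant model with positive definite weights, for every data
`(z, u, s̄)` the MHE cost has a unique minimizer over trajectories, and the minimizer
depends linearly on the data `(z, u, s̄)` (hence so does the output prediction `C x̂*ₘ`). -/
theorem mhe_unique_minimizer_linear_in_data
    {n p q m : ℕ} (hn : 0 < n) (hp : 0 < p) (hq : 0 < q) (hm : 0 < m)
    (A : Matrix (Fin n) (Fin n) ℝ) (B : Matrix (Fin n) (Fin q) ℝ)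
    (C : Matrix (Fin p) (Fin n) ℝ)
    (Sig Q : Matrix (Fin n) (Fin n) ℝ) (R : Matrix (Fin p) (Fin p) ℝ)
    (hSig : Sig.PosDef) (hQ : Q.PosDef) (hR : R.PosDef) :
    let L : (Fin m → Fin p → ℝ) × (Fin m → Fin q → ℝ) × (Fin n → ℝ) →
        (Fin (m + 1) → Fin n → ℝ) → ℝ := fun zus xs =>
      (xs 0 - zus.2.2) ⬝ᵥ Sig⁻¹.mulVec (xs 0 - zus.2.2)
      + ∑ j : Fin m, (zus.1 j - C.mulVec (xs j.succ)) ⬝ᵥ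
          R⁻¹.mulVec (zus.1 j - C.mulVec (xs j.succ))
      + ∑ j : Fin m, (xs j.succ - A.mulVec (xs j.castSucc) - B.mulVec (zus.2.1 j)) ⬝ᵥ
          Q⁻¹.mulVec (xs j.succ - A.mulVec (xs j.castSucc) - B.mulVec (zus.2.1 j))
    ∃ T : ((Fin m → Fin p → ℝ) × (Fin m → Fin q → ℝ) × (Fin n → ℝ)) →ₗ[ℝ]
        (Fin (m + 1) → Fin n → ℝ),
      ∀ zus, (∀ xs, L zus (T zus) ≤ L zus xs) ∧
        ∀ xs, L zus xs ≤ L zus (T zus) → xs = T zus :=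
  mhe_unique_minimizer_linear_in_data_general A B C Sig Q R hSig hQ hR
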